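/- arXiv:1104.4630 — 2 statements merged into one kernel-verified Lean document; each statement's English description precedes it below -/
import Mathlib

section
/- Classical dilogarithm identity of type A₂ (first unsigned form): for all real y₁ > 0 and y₂ > 0, L(y₁/(1+y₁)) + L(y₂(1+y₁)/(1+y₂+y₁y₂)) + L((1+y₂+y₁y₂)/(1+y₁+y₂+y₁y₂)) + L((1+y₂)/(1+y₂+y₁y₂)) + L(1/(1+y₂)) = π²/2. -/
/-!
The integrand `L'(x) = -(log (1 - x) / x + log x / (1 - x)) / 2` is invariant under `x ↦ 1 - x`,
so `L x + L (1 - x) = L 1`, and integrating `-log (1 - y) / y = ∑ yⁿ / (n + 1)` termwise gives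
`L 1 = ζ(2) = π² / 6`. For fixed `y`, the four terms
`L x + L (1 - x y) + L ((1 - x) / (1 - x y)) + L ((1 - y) / (1 - x y))` have zero derivative in `x`,
and at `x = 0` they equal `2 L 1 + L (1 - y)`. Adding `L y` gives Abel's five-term relation with
sum `3 L 1 = π² / 2`; the theorem is its instance `x = y₁ / (1 + y₁)`, `y = 1 / (1 + y₂)`.
-/

open Real

/-- The Rogers dilogarithm, defined for `0 ≤ x ≤ 1` by
`L(x) = -(1/2) ∫₀ˣ (log(1-y)/y + log(y)/(1-y)) dy`. -/
noncomputable def rogersL (x : ℝ) : ℝ :=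
  -(1 / 2) * ∫ y in (0:ℝ)..x, (Real.log (1 - y) / y + Real.log y / (1 - y))

open MeasureTheory Set Filter intervalIntegral

lemma intervalIntegrable_log_div_one_sub :
    IntervalIntegrable (fun y => log y / (1 - y)) volume 0 1 := by
  refine (intervalIntegrable_const (c := (1 : ℝ))).sub intervalIntegrable_log' |>.mono_fun'
    (by fun_prop : Measurable fun y : ℝ => log y / (1 - y)).aestronglyMeasurable ?_
  rw [uIoc_of_le zero_le_one]
  filter_upwards [ae_restrict_mem measurableSet_Ioc] with y ⟨hy0, hy1⟩
  have hlog : log y ≤ 0 := log_nonpos hy0.le hy1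
  rcases hy1.eq_or_lt with rfl | hy1
  · simp
  -- the bound `-log y / (1 - y) ≤ 1 - log y` amounts to `y log y ≥ y - 1`
  have hylog : y - 1 ≤ y * log y := by
    have := mul_le_mul_of_nonneg_left (one_sub_inv_le_log_of_pos hy0) hy0.le
    rwa [mul_sub, mul_one, mul_inv_cancel₀ hy0.ne'] at this
  rw [norm_div, norm_of_nonpos hlog, norm_of_nonneg (by linarith), div_le_iff₀ (by linarith)]
  nlinarith

lemma intervalIntegrable_log_one_sub_div :
    IntervalIntegrable (fun y => log (1 - y) / y) volume 0 1 := by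
  simpa using (intervalIntegrable_log_div_one_sub.comp_sub_left 1).symm

noncomputable def rogersIntegrand (y : ℝ) : ℝ := log (1 - y) / y + log y / (1 - y)

lemma rogersIntegrand_one_sub (y : ℝ) : rogersIntegrand (1 - y) = rogersIntegrand y := by
  simp only [rogersIntegrand, sub_sub_cancel]
  ring

lemma intervalIntegrable_rogersIntegrand {a b : ℝ} (ha : a ∈ Icc (0:ℝ) 1)
    (hb : b ∈ Icc (0:ℝ) 1) : IntervalIntegrable rogersIntegrand volume a b :=
  (intervalIntegrable_log_one_sub_div.add intervalIntegrable_log_div_one_sub).mono_set <| by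
    rw [uIcc_of_le zero_le_one]
    exact uIcc_subset_Icc ha hb

lemma rogersL_zero : rogersL 0 = 0 := by
  simp [rogersL]

lemma continuousOn_rogersL : ContinuousOn rogersL (Icc 0 1) := by
  have hint : IntegrableOn rogersIntegrand (Icc 0 1) volume :=
    (intervalIntegrable_iff_integrableOn_Icc_of_le zero_le_one).1 <|
      intervalIntegrable_rogersIntegrand (left_mem_Icc.2 zero_le_one) (right_mem_Icc.2 zero_le_one)
  rw [← uIcc_of_le zero_le_one] at hint ⊢
  exact continuousOn_const.mul (continuousOn_primitive_interval hint)

lemma rogersL_hasDerivAt {x : ℝ} (hx : x ∈ Ioo (0:ℝ) 1) :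
    HasDerivAt rogersL (-(1 / 2) * rogersIntegrand x) x := by
  have hint : IntervalIntegrable rogersIntegrand volume 0 x :=
    intervalIntegrable_rogersIntegrand (left_mem_Icc.2 zero_le_one) (Ioo_subset_Icc_self hx)
  have hmeas : Measurable rogersIntegrand := by
    unfold rogersIntegrand
    fun_prop
  have hcont : ContinuousAt rogersIntegrand x := by
    have hx0 : x ≠ 0 := hx.1.ne'
    have hx1 : 1 - x ≠ 0 := by linarith [hx.2]
    unfold rogersIntegrand
    fun_prop (disch := assumption)
  exact (integral_hasDerivAt_right hint hmeas.stronglyMeasurable.stronglyMeasurableAtFilter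
    hcont).const_mul _

lemma HasDerivAt.rogersL {f : ℝ → ℝ} {f' t : ℝ} (hf : HasDerivAt f f' t)
    (ht : f t ∈ Ioo 0 1) :
    HasDerivAt (fun s => rogersL (f s)) (-(1 / 2) * rogersIntegrand (f t) * f') t :=
  (rogersL_hasDerivAt ht).comp t hf

lemma eq_left_of_hasDerivAt_zero {f : ℝ → ℝ} {a b x : ℝ} (hf : ContinuousOn f (Icc a b))
    (hf' : ∀ t ∈ Ioo a b, HasDerivAt f 0 t) (hx : x ∈ Icc a b) : f x = f a := by
  rcases hx.1.eq_or_lt with rfl | hax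
  · rfl
  obtain ⟨c, -, hc⟩ := exists_hasDerivAt_eq_slope f (fun _ => 0) hax
    (hf.mono (Icc_subset_Icc_right hx.2)) fun t ht => hf' t ⟨ht.1, ht.2.trans_le hx.2⟩
  rw [eq_comm, div_eq_zero_iff, sub_eq_zero, sub_eq_zero] at hc
  exact hc.resolve_right hax.ne'

lemma rogersL_add_rogersL_one_sub {y : ℝ} (hy : y ∈ Icc (0:ℝ) 1) :
    rogersL y + rogersL (1 - y) = rogersL 1 := by
  have hcont : ContinuousOn (fun y => rogersL y + rogersL (1 - y)) (Icc 0 1) :=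
    continuousOn_rogersL.add <| continuousOn_rogersL.comp (by fun_prop)
      fun y hy => ⟨by linarith [hy.2], by linarith [hy.1]⟩
  have hderiv (t : ℝ) (ht : t ∈ Ioo (0:ℝ) 1) :
      HasDerivAt (fun y => rogersL y + rogersL (1 - y)) 0 t := by
    have h := (rogersL_hasDerivAt ht).add
      (((hasDerivAt_id' t).const_sub 1).rogersL ⟨by linarith [ht.2], by linarith [ht.1]⟩)
    refine h.congr_deriv ?_
    rw [rogersIntegrand_one_sub]
    ring
  simpa [rogersL_zero] using eq_left_of_hasDerivAt_zero hcont hderiv hy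

lemma hasSum_one_div_nat_add_one_sq :
    HasSum (fun n : ℕ => 1 / ((n : ℝ) + 1) ^ 2) (π ^ 2 / 6) := by
  simpa using (hasSum_nat_add_iff' 1).2 hasSum_zeta_two

lemma integral_pow_div_Ioo (n : ℕ) :
    ∫ y in Ioo (0:ℝ) 1, y ^ n / ((n : ℝ) + 1) = 1 / ((n : ℝ) + 1) ^ 2 := by
  rw [← integral_Ioc_eq_integral_Ioo, ← integral_of_le zero_le_one,
    intervalIntegral.integral_div, integral_pow]
  field_simp
  simp

lemma integral_log_one_sub_div : ∫ y in (0:ℝ)..1, log (1 - y) / y = -(π ^ 2 / 6) := by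
  set F : ℕ → ℝ → ℝ := fun n y => y ^ n / ((n : ℝ) + 1)
  have hF_int (n : ℕ) : IntegrableOn (F n) (Ioo 0 1) :=
    (by fun_prop : Continuous (F n)).integrableOn_Icc.mono_set Ioo_subset_Icc_self
  have hF_norm (n : ℕ) : ∫ y in Ioo (0:ℝ) 1, ‖F n y‖ = 1 / ((n : ℝ) + 1) ^ 2 := by
    rw [← integral_pow_div_Ioo n]
    refine setIntegral_congr_fun measurableSet_Ioo fun y hy => norm_of_nonneg ?_
    have := hy.1.le
    positivity
  have hF_sum : ∀ y ∈ Ioo (0:ℝ) 1, HasSum (F · y) (-(log (1 - y) / y)) := by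
    intro y ⟨hy0, hy1⟩
    have h := (hasSum_pow_div_log_of_abs_lt_one (abs_lt.2 ⟨by linarith, hy1⟩)).div_const y
    have hF : (F · y) = fun n : ℕ => y ^ (n + 1) / ((n : ℝ) + 1) / y :=
      funext fun n => by simp only [F]; field_simp; ring
    rwa [hF, ← neg_div]
  have hF_tsum : ∫ y in Ioo (0:ℝ) 1, ∑' n, F n y = π ^ 2 / 6 :=
    (hasSum_integral_of_summable_integral_norm hF_int
      (by simpa only [hF_norm] using hasSum_one_div_nat_add_one_sq.summable)).unique
      (by simpa only [F, integral_pow_div_Ioo] using hasSum_one_div_nat_add_one_sq)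
  rw [integral_of_le zero_le_one, integral_Ioc_eq_integral_Ioo, ← hF_tsum,
    ← MeasureTheory.integral_neg]
  exact setIntegral_congr_fun measurableSet_Ioo fun y hy => by
    rw [(hF_sum y hy).tsum_eq, neg_neg]

lemma rogersL_one : rogersL 1 = π ^ 2 / 6 := by
  have hsymm : ∫ y in (0:ℝ)..1, log y / (1 - y) = ∫ y in (0:ℝ)..1, log (1 - y) / y := by
    simpa using (integral_comp_sub_left (fun y => log y / (1 - y)) 1 (a := 0) (b := 1)).symm
  rw [rogersL, integral_add intervalIntegrable_log_one_sub_div intervalIntegrable_log_div_one_sub,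
    hsymm, integral_log_one_sub_div]
  ring

noncomputable def abelSum (y t : ℝ) : ℝ :=
  rogersL t + rogersL (1 - t * y) + rogersL ((1 - t) / (1 - t * y))
    + rogersL ((1 - y) / (1 - t * y))

section abelSum

variable {y : ℝ}

lemma continuousOn_abelSum (hy : y ∈ Ioo (0:ℝ) 1) : ContinuousOn (abelSum y) (Icc 0 1) := by
  obtain ⟨hy0, hy1⟩ := hy
  have hpos (t : ℝ) (ht : t ∈ Icc (0:ℝ) 1) : 0 < 1 - t * y := by nlinarith [ht.2]
  have hcomp {f : ℝ → ℝ} (hf : ContinuousOn f (Icc 0 1))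
      (hmaps : MapsTo f (Icc 0 1) (Icc 0 1)) :
      ContinuousOn (fun t => rogersL (f t)) (Icc 0 1) :=
    continuousOn_rogersL.comp hf hmaps
  have hden : ContinuousOn (fun t => 1 - t * y) (Icc 0 1) := by fun_prop
  have hne (t : ℝ) (ht : t ∈ Icc (0:ℝ) 1) : 1 - t * y ≠ 0 := (hpos t ht).ne'
  refine ((continuousOn_rogersL.add (hcomp hden fun t ht => ?_)).add
    (hcomp (f := fun t => (1 - t) / (1 - t * y))
      ((continuousOn_const.sub (continuousOn_id' _)).div hden hne) fun t ht => ?_)).add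
    (hcomp (f := fun t => (1 - y) / (1 - t * y)) (continuousOn_const.div hden hne) fun t ht => ?_)
  · exact ⟨(hpos t ht).le, by nlinarith [ht.1]⟩
  · exact ⟨div_nonneg (by linarith [ht.2]) (hpos t ht).le,
      (div_le_one (hpos t ht)).2 (by nlinarith [ht.1])⟩
  · exact ⟨div_nonneg (by linarith) (hpos t ht).le,
      (div_le_one (hpos t ht)).2 (by nlinarith [ht.2])⟩

lemma hasDerivAt_abelSum (hy : y ∈ Ioo (0:ℝ) 1) {t : ℝ} (ht : t ∈ Ioo (0:ℝ) 1) :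
    HasDerivAt (abelSum y) 0 t := by
  obtain ⟨hy0, hy1⟩ := hy
  obtain ⟨ht0, ht1⟩ := ht
  have hu0 : 0 < 1 - t * y := by nlinarith
  have hu1 : 1 - t * y < 1 := by nlinarith
  have hu : 1 - t * y ≠ 0 := hu0.ne'
  have hv : (1 - t) / (1 - t * y) ∈ Ioo (0:ℝ) 1 :=
    ⟨div_pos (by linarith) hu0, (div_lt_one hu0).2 (by nlinarith)⟩
  have hw : (1 - y) / (1 - t * y) ∈ Ioo (0:ℝ) 1 :=
    ⟨div_pos (by linarith) hu0, (div_lt_one hu0).2 (by nlinarith)⟩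
  have du : HasDerivAt (fun s => 1 - s * y) (-y) t := by
    simpa using (hasDerivAt_mul_const y).const_sub 1
  have dv := ((hasDerivAt_id' t).const_sub 1).fun_div du hu
  have dw := (hasDerivAt_const t (1 - y)).fun_div du hu
  refine ((((rogersL_hasDerivAt ⟨ht0, ht1⟩).add (du.rogersL ⟨hu0, hu1⟩)).add
    (dv.rogersL hv)).add (dw.rogersL hw)).congr_deriv ?_
  -- all ten logarithms are sums of `log t`, `log (1 - t)`, `log y`, `log (1 - y)`, `log (1 - t y)`
  simp only [rogersIntegrand]
  rw [show 1 - (1 - t * y) = t * y by ring,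
    show 1 - (1 - t) / (1 - t * y) = t * (1 - y) / (1 - t * y) by rw [one_sub_div hu]; ring,
    show 1 - (1 - y) / (1 - t * y) = y * (1 - t) / (1 - t * y) by rw [one_sub_div hu]; ring,
    log_mul ht0.ne' hy0.ne', log_div (by positivity) hu, log_div (by positivity) hu,
    log_div (by positivity) hu, log_div (by positivity) hu,
    log_mul ht0.ne' (by linarith), log_mul hy0.ne' (by linarith)]
  field_simp
  ring

end abelSum

theorem rogersL_five_term {x y : ℝ} (hx : x ∈ Icc (0:ℝ) 1) (hy : y ∈ Ioo (0:ℝ) 1) :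
    rogersL x + rogersL (1 - x * y) + rogersL ((1 - x) / (1 - x * y))
      + rogersL ((1 - y) / (1 - x * y)) + rogersL y = π ^ 2 / 2 := by
  have h := eq_left_of_hasDerivAt_zero (continuousOn_abelSum hy)
    (fun t ht => hasDerivAt_abelSum hy ht) hx
  simp only [abelSum, zero_mul, sub_zero, div_one, rogersL_zero, zero_add] at h
  rw [h]
  linarith [rogersL_add_rogersL_one_sub (Ioo_subset_Icc_self hy), rogersL_one]

/-- Classical dilogarithm identity of type `A₂`, first unsigned form. -/
theorem dilogarithm_identity_A2_unsigned_first (y₁ y₂ : ℝ) (h1 : 0 < y₁) (h2 : 0 < y₂) :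
    rogersL (y₁ / (1 + y₁)) + rogersL (y₂ * (1 + y₁) / (1 + y₂ + y₁ * y₂))
      + rogersL ((1 + y₂ + y₁ * y₂) / (1 + y₁ + y₂ + y₁ * y₂))
      + rogersL ((1 + y₂) / (1 + y₂ + y₁ * y₂))
      + rogersL (1 / (1 + y₂)) = π ^ 2 / 2 := by
  have hx : y₁ / (1 + y₁) ∈ Icc (0:ℝ) 1 :=
    ⟨by positivity, (div_le_one (by positivity)).2 (by linarith)⟩
  have hy : 1 / (1 + y₂) ∈ Ioo (0:ℝ) 1 :=
    ⟨by positivity, (div_lt_one (by positivity)).2 (by linarith)⟩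
  have e1 : 1 - y₁ / (1 + y₁) * (1 / (1 + y₂))
      = (1 + y₂ + y₁ * y₂) / (1 + y₁ + y₂ + y₁ * y₂) := by
    field_simp
    ring
  have e2 : (1 - y₁ / (1 + y₁)) / ((1 + y₂ + y₁ * y₂) / (1 + y₁ + y₂ + y₁ * y₂))
      = (1 + y₂) / (1 + y₂ + y₁ * y₂) := by
    field_simp
    ring
  have e3 : (1 - 1 / (1 + y₂)) / ((1 + y₂ + y₁ * y₂) / (1 + y₁ + y₂ + y₁ * y₂))
      = y₂ * (1 + y₁) / (1 + y₂ + y₁ * y₂) := by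
    field_simp
    ring
  have h := rogersL_five_term hx hy
  rw [e1, e2, e3] at h
  linarith
end

section
/- Adjoint action of the quantum dilogarithm: let 𝒜 be a complex unital Banach algebra, q ∈ ℂ with 0 < |q| < 1, b a nonzero integer with sign s = sgn(b), and U, V ∈ 𝒜 with U·V = q^{2b}·V·U and ‖V‖ < |q|^{2|b|}. Then Ψ_q(V) is invertible, each element 1 + q^{−s(2m−1)} V for 1 ≤ m ≤ |b| is invertible, and Ψ_q(V)·U·Ψ_q(V)^{−1} = U·∏_{m=1}^{|b|} (1 + q^{−s(2m−1)} V)^{−s}. -/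
/-!
The coefficients `cₙ` of `Ψ_q` satisfy `c_{n+1} (1 - q^{2n+2}) = -q cₙ`, which is the functional
equation `Ψ_q(q² W) = (1 + q W) Ψ_q(W)`; iterated, it gives
`Ψ_q(q^{2N} W) = ∏_{m<N} (1 + q^{2m+1} W) · Ψ_q(W)`. The relation `UV = q^{2b} VU` gives
`Vⁿ U = U (q^{-2b} V)ⁿ`, hence `Ψ_q(V) U = U Ψ_q(q^{-2b} V)`. For `b < 0` the iterated functional
equation at `W = V` finishes the computation; for `b > 0` it is applied at `W = q^{-2b} V` and the
product is inverted.

Invertibility of `Ψ_q(V)`: by the ratio test `Ψ_q` is a power series of radius `1/|q|`, so it is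
continuous at `0` with `Ψ_q(0) = 1`. Hence `Ψ_q(q^{2N} V)` is invertible for large `N`, and then so
is `Ψ_q(V)`, the factors `1 + q^{2m+1} V` being invertible.
-/

/-- The quantum dilogarithm `Ψ_q(W) = Σₙ (-q)ⁿ Wⁿ / ∏_{k=1}^n (1 - q^{2k})` of an
element `W` of a complex unital Banach algebra, for `0 < |q| < 1` and `‖W‖ < 1/|q|`. -/
noncomputable def quantumPsiB {A : Type*} [NormedRing A] [NormedAlgebra ℂ A]
    (q : ℂ) (W : A) : A :=
  ∑' n : ℕ, ((-q) ^ n / ∏ k ∈ Finset.range n, (1 - q ^ (2 * (k + 1)))) • W ^ n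

open Filter Topology FormalMultilinearSeries

noncomputable def quantumPsiCoeff (q : ℂ) (n : ℕ) : ℂ :=
  (-q) ^ n / ∏ k ∈ Finset.range n, (1 - q ^ (2 * (k + 1)))

lemma one_sub_pow_ne_zero {𝕜 : Type*} [NormedDivisionRing 𝕜] {x : 𝕜} (hx : ‖x‖ < 1) {n : ℕ}
    (hn : n ≠ 0) : 1 - x ^ n ≠ 0 := by
  refine sub_ne_zero.2 fun h => ?_
  have : ‖x ^ n‖ < 1 := by rw [norm_pow]; exact pow_lt_one₀ (norm_nonneg x) hx hn
  rw [← h, norm_one] at this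
  exact this.false

section Coefficients

variable {q : ℂ}

@[simp]
lemma quantumPsiCoeff_zero : quantumPsiCoeff q 0 = 1 := by
  simp [quantumPsiCoeff]

lemma quantumPsiCoeff_succ (n : ℕ) :
    quantumPsiCoeff q (n + 1) = quantumPsiCoeff q n * (-q / (1 - q ^ (2 * (n + 1)))) := by
  rw [quantumPsiCoeff, quantumPsiCoeff, Finset.prod_range_succ, pow_succ, mul_div_mul_comm]

lemma quantumPsiCoeff_ne_zero (hq : q ≠ 0) (hq1 : ‖q‖ < 1) (n : ℕ) : quantumPsiCoeff q n ≠ 0 :=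
  div_ne_zero (pow_ne_zero _ (neg_ne_zero.2 hq))
    (Finset.prod_ne_zero_iff.2 fun _ _ => one_sub_pow_ne_zero hq1 (by omega))

lemma tendsto_norm_quantumPsiCoeff_succ_div (hq : q ≠ 0) (hq1 : ‖q‖ < 1) :
    Tendsto (fun n => ‖quantumPsiCoeff q n.succ‖ / ‖quantumPsiCoeff q n‖) atTop (𝓝 ‖q‖) := by
  have hratio : ∀ n : ℕ, ‖quantumPsiCoeff q n.succ‖ / ‖quantumPsiCoeff q n‖ =
      ‖q‖ / ‖1 - (q ^ 2) ^ (n + 1)‖ := fun n => by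
    rw [quantumPsiCoeff_succ, norm_mul, mul_div_cancel_left₀ _
      (norm_ne_zero_iff.2 (quantumPsiCoeff_ne_zero hq hq1 n)), norm_div, norm_neg, pow_mul]
  have hq2 : ‖q ^ 2‖ < 1 := by rw [norm_pow]; exact pow_lt_one₀ (norm_nonneg q) hq1 two_ne_zero
  have hpow : Tendsto (fun n : ℕ => (q ^ 2) ^ (n + 1)) atTop (𝓝 0) :=
    (tendsto_pow_atTop_nhds_zero_of_norm_lt_one hq2).comp (tendsto_add_atTop_nat 1)
  have hlim : Tendsto (fun n : ℕ => ‖q‖ / ‖1 - (q ^ 2) ^ (n + 1)‖) atTop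
      (𝓝 (‖q‖ / ‖(1 : ℂ) - 0‖)) :=
    tendsto_const_nhds.div (tendsto_const_nhds.sub hpow).norm (by simp)
  simpa [hratio] using hlim

end Coefficients

section Commutation

variable {𝕜 R : Type*} [Field 𝕜] [Ring R] [Algebra 𝕜 R] {U V : R} {d : 𝕜}

lemma pow_mul_eq_mul_inv_smul_pow (hd : d ≠ 0) (hUV : U * V = d • (V * U)) (n : ℕ) :
    V ^ n * U = U * (d⁻¹ • V) ^ n := by
  have hVU : V * U = d⁻¹ • (U * V) := by rw [hUV, smul_smul, inv_mul_cancel₀ hd, one_smul]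
  induction n with
  | zero => simp
  | succ n ih =>
    calc V ^ (n + 1) * U = d⁻¹ • (V ^ n * U * V) := by
          rw [pow_succ, mul_assoc, hVU, mul_smul_comm, mul_assoc]
      _ = U * (d⁻¹ • V) ^ (n + 1) := by
          rw [ih, pow_succ, mul_smul_comm, mul_smul_comm, mul_assoc]

lemma tsum_smul_pow_mul_eq_mul_tsum [TopologicalSpace R] [IsTopologicalRing R] [T2Space R]
    {c : ℕ → 𝕜} (hd : d ≠ 0) (hUV : U * V = d • (V * U))
    (hV : Summable fun n => c n • V ^ n) (hdV : Summable fun n => c n • (d⁻¹ • V) ^ n) :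
    (∑' n, c n • V ^ n) * U = U * ∑' n, c n • (d⁻¹ • V) ^ n := by
  rw [← hV.tsum_mul_right, ← hdV.tsum_mul_left]
  simp_rw [smul_mul_assoc, pow_mul_eq_mul_inv_smul_pow hd hUV, mul_smul_comm]

end Commutation

lemma Ring.inverse_list_prod {M₀ : Type*} [MonoidWithZero M₀] {l : List M₀}
    (hl : ∀ x ∈ l, IsUnit x) : Ring.inverse l.prod = (l.map Ring.inverse).reverse.prod := by
  induction l with
  | nil => simp
  | cons a l ih =>
    rw [List.prod_cons, Ring.inverse_mul (Or.inl (hl a List.mem_cons_self)),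
      ih fun x hx => hl x (List.mem_cons_of_mem a hx)]
    simp

lemma isUnit_one_add_of_norm_lt_one {R : Type*} [NormedRing R] [HasSummableGeomSeries R] {x : R}
    (h : ‖x‖ < 1) : IsUnit (1 + x) := by
  simpa using isUnit_one_sub_of_norm_lt_one (x := -x) (by rwa [norm_neg])

section NormedSpace

variable {𝕜 E : Type*} [NormedField 𝕜] [SeminormedAddCommGroup E] [NormedSpace 𝕜 E] {c : 𝕜}

lemma norm_pow_smul_le (hc : ‖c‖ ≤ 1) (n : ℕ) (x : E) : ‖c ^ n • x‖ ≤ ‖x‖ := by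
  rw [norm_smul, norm_pow]
  exact mul_le_of_le_one_left (norm_nonneg x) (pow_le_one₀ (norm_nonneg c) hc)

lemma norm_zpow_smul_lt_one (hc : c ≠ 0) (hc1 : ‖c‖ ≤ 1) {x : E} {n : ℕ} (hx : ‖x‖ < ‖c‖ ^ n)
    {k : ℤ} (hk : 0 ≤ k + n) : ‖c ^ k • x‖ < 1 := by
  have hc0 : 0 < ‖c‖ := norm_pos_iff.2 hc
  calc ‖c ^ k • x‖ = ‖c‖ ^ k * ‖x‖ := by rw [norm_smul, norm_zpow]
    _ < ‖c‖ ^ k * ‖c‖ ^ n := mul_lt_mul_of_pos_left hx (zpow_pos hc0 k)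
    _ = ‖c‖ ^ (k + n) := by rw [zpow_add₀ hc0.ne', zpow_natCast]
    _ ≤ 1 := zpow_le_one₀ hc0 hc1 hk

end NormedSpace

section BanachAlgebra

variable {A : Type*} [NormedRing A] [NormedAlgebra ℂ A] {q : ℂ}

lemma quantumPsiB_eq_tsum (q : ℂ) (W : A) :
    quantumPsiB q W = ∑' n, quantumPsiCoeff q n • W ^ n :=
  rfl

lemma quantumPsiB_eq_ofScalarsSum (q : ℂ) :
    quantumPsiB (A := A) q = ofScalarsSum (quantumPsiCoeff q) :=
  (ofScalarsSum_eq_tsum _).symm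

@[simp]
lemma quantumPsiB_zero (q : ℂ) : quantumPsiB q (0 : A) = 1 := by
  rw [quantumPsiB_eq_ofScalarsSum, ofScalarsSum_zero, quantumPsiCoeff_zero, one_smul]

lemma inv_norm_le_radius_ofScalars_quantumPsiCoeff (hq : q ≠ 0) (hq1 : ‖q‖ < 1) :
    ((‖q‖₊⁻¹ : NNReal) : ENNReal) ≤ (ofScalars A (quantumPsiCoeff q)).radius :=
  inv_le_ofScalars_radius_of_tendsto A _ (by simpa using hq)
    (tendsto_norm_quantumPsiCoeff_succ_div hq hq1)

lemma mem_eball_radius_ofScalars_quantumPsiCoeff (hq : q ≠ 0) (hq1 : ‖q‖ < 1) {W : A}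
    (hW : ‖q‖ * ‖W‖ < 1) : W ∈ Metric.eball 0 (ofScalars A (quantumPsiCoeff q)).radius := by
  refine Metric.mem_eball.2
    (lt_of_lt_of_le ?_ (inv_norm_le_radius_ofScalars_quantumPsiCoeff hq hq1))
  rw [edist_zero_right, enorm_eq_nnnorm, ENNReal.coe_lt_coe,
    NNReal.lt_inv_iff_mul_lt (by simpa using hq), mul_comm, ← NNReal.coe_lt_coe]
  simpa using hW

variable [CompleteSpace A]

lemma summable_quantumPsiCoeff_smul_pow (hq : q ≠ 0) (hq1 : ‖q‖ < 1) {W : A}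
    (hW : ‖q‖ * ‖W‖ < 1) : Summable fun n => quantumPsiCoeff q n • W ^ n := by
  simpa [ofScalars_apply_eq] using
    (ofScalars A (quantumPsiCoeff q)).summable
      (mem_eball_radius_ofScalars_quantumPsiCoeff hq hq1 hW)

lemma continuousAt_quantumPsiB_zero (hq : q ≠ 0) (hq1 : ‖q‖ < 1) :
    ContinuousAt (quantumPsiB (A := A) q) 0 := by
  have hradius : 0 < (ofScalars A (quantumPsiCoeff q)).radius :=
    (ENNReal.coe_pos.2 (inv_pos.2 (nnnorm_pos.2 hq))).trans_le
      (inv_norm_le_radius_ofScalars_quantumPsiCoeff hq hq1)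
  rw [quantumPsiB_eq_ofScalarsSum, ofScalarsSum]
  exact ((ofScalars A (quantumPsiCoeff q)).hasFPowerSeriesOnBall
    hradius).hasFPowerSeriesAt.continuousAt

lemma quantumPsiB_sq_smul (hq : q ≠ 0) (hq1 : ‖q‖ < 1) {W : A} (hW : ‖q‖ * ‖W‖ < 1) :
    quantumPsiB q (q ^ 2 • W) = (1 + q • W) * quantumPsiB q W := by
  have hS := summable_quantumPsiCoeff_smul_pow hq hq1 hW
  have hS2 := summable_quantumPsiCoeff_smul_pow hq hq1 (W := q ^ 2 • W)
    ((mul_le_mul_of_nonneg_left (norm_pow_smul_le hq1.le 2 W) (norm_nonneg q)).trans_lt hW)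
  have hcoeff (n : ℕ) : quantumPsiCoeff q (n + 1) * (q ^ 2) ^ (n + 1) =
      quantumPsiCoeff q (n + 1) + q * quantumPsiCoeff q n := by
    have := one_sub_pow_ne_zero hq1 (n := 2 * (n + 1)) (by omega)
    rw [quantumPsiCoeff_succ, ← pow_mul]
    field_simp
    ring
  have hterm (n : ℕ) : quantumPsiCoeff q (n + 1) • (q ^ 2 • W) ^ (n + 1) =
      quantumPsiCoeff q (n + 1) • W ^ (n + 1) + q • W * (quantumPsiCoeff q n • W ^ n) := by
    rw [smul_pow, smul_smul, hcoeff, add_smul, smul_mul_smul_comm, ← pow_succ', mul_comm]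
  calc quantumPsiB q (q ^ 2 • W)
      = 1 + ∑' n, quantumPsiCoeff q (n + 1) • (q ^ 2 • W) ^ (n + 1) := by
        simp [quantumPsiB_eq_tsum, hS2.tsum_eq_zero_add]
    _ = (1 + ∑' n, quantumPsiCoeff q (n + 1) • W ^ (n + 1)) + q • W * quantumPsiB q W := by
        simp_rw [hterm]
        rw [((summable_nat_add_iff 1).2 hS).tsum_add (hS.mul_left _), hS.tsum_mul_left,
          quantumPsiB_eq_tsum, add_assoc]
    _ = (1 + q • W) * quantumPsiB q W := by
        simp [quantumPsiB_eq_tsum, hS.tsum_eq_zero_add, add_mul]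

lemma quantumPsiB_mul_eq_mul_quantumPsiB_inv_smul (hq : q ≠ 0) (hq1 : ‖q‖ < 1) {U V : A} {d : ℂ}
    (hd : d ≠ 0) (hUV : U * V = d • (V * U)) (hV : ‖q‖ * ‖V‖ < 1)
    (hdV : ‖q‖ * ‖d⁻¹ • V‖ < 1) :
    quantumPsiB q V * U = U * quantumPsiB q (d⁻¹ • V) :=
  tsum_smul_pow_mul_eq_mul_tsum hd hUV (summable_quantumPsiCoeff_smul_pow hq hq1 hV)
    (summable_quantumPsiCoeff_smul_pow hq hq1 hdV)

lemma quantumPsiB_pow_smul (hq : q ≠ 0) (hq1 : ‖q‖ < 1) {W : A} (hW : ‖q‖ * ‖W‖ < 1) (N : ℕ) :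
    quantumPsiB q (q ^ (2 * N) • W) =
      ((List.range N).map fun m => 1 + q ^ (2 * m + 1) • W).prod * quantumPsiB q W := by
  induction N with
  | zero => simp
  | succ N ih =>
    have hNW : ‖q‖ * ‖q ^ (2 * N) • W‖ < 1 :=
      (mul_le_mul_of_nonneg_left (norm_pow_smul_le hq1.le _ W) (norm_nonneg q)).trans_lt hW
    have hcomm : Commute (1 + q ^ (2 * N + 1) • W)
        ((List.range N).map fun m => 1 + q ^ (2 * m + 1) • W).prod := by
      refine Commute.list_prod_right _ _ fun x hx => ?_
      obtain ⟨m, -, rfl⟩ := List.mem_map.1 hx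
      exact (Commute.one_left _).add_left
        ((Commute.one_right _).add_right (((Commute.refl W).smul_left _).smul_right _))
    calc quantumPsiB q (q ^ (2 * (N + 1)) • W) = quantumPsiB q (q ^ 2 • q ^ (2 * N) • W) := by
          rw [smul_smul, ← pow_add]; ring_nf
      _ = (1 + q ^ (2 * N + 1) • W) * quantumPsiB q (q ^ (2 * N) • W) := by
          rw [quantumPsiB_sq_smul hq hq1 hNW, smul_smul, ← pow_succ']
      _ = _ := by rw [ih, ← mul_assoc, hcomm.eq, List.prod_range_succ]

lemma isUnit_quantumPsiB (hq : q ≠ 0) (hq1 : ‖q‖ < 1) {W : A} (hW : ‖q‖ * ‖W‖ < 1) :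
    IsUnit (quantumPsiB q W) := by
  have hq2 : ‖q ^ 2‖ < 1 := by rw [norm_pow]; exact pow_lt_one₀ (norm_nonneg q) hq1 two_ne_zero
  have hshift : Tendsto (fun N : ℕ => q ^ (2 * N) • W) atTop (𝓝 0) := by
    simpa [pow_mul] using (tendsto_pow_atTop_nhds_zero_of_norm_lt_one hq2).smul_const W
  have hlim : Tendsto (fun N : ℕ => quantumPsiB q (q ^ (2 * N) • W)) atTop (𝓝 1) := by
    rw [← quantumPsiB_zero (A := A) q]
    exact (continuousAt_quantumPsiB_zero hq hq1).tendsto.comp hshift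
  obtain ⟨N, hN⟩ := (hlim.eventually (Units.isOpen.mem_nhds isUnit_one)).exists
  rw [quantumPsiB_pow_smul hq hq1 hW] at hN
  have hfactors : IsUnit ((List.range N).map fun m => 1 + q ^ (2 * m + 1) • W).prod := by
    refine List.prod_isUnit fun x hx => ?_
    obtain ⟨m, -, rfl⟩ := List.mem_map.1 hx
    refine isUnit_one_add_of_norm_lt_one ?_
    rw [pow_succ, mul_smul]
    exact (norm_pow_smul_le hq1.le _ (q • W)).trans_lt (by rwa [norm_smul])
  exact (Units.isUnit_units_mul hfactors.unit _).1 hN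

lemma quantumPsiB_conj_of_mul_eq_inv_pow_smul (hq : q ≠ 0) (hq1 : ‖q‖ < 1) {U V : A} {N : ℕ}
    (hUV : U * V = (q ^ (2 * N))⁻¹ • (V * U)) (hV : ‖q‖ * ‖V‖ < 1) :
    quantumPsiB q V * U * Ring.inverse (quantumPsiB q V) =
      U * ((List.range N).map fun m => 1 + q ^ (2 * m + 1) • V).prod := by
  have hdV : ‖q‖ * ‖(q ^ (2 * N))⁻¹⁻¹ • V‖ < 1 := by
    rw [inv_inv]
    exact (mul_le_mul_of_nonneg_left (norm_pow_smul_le hq1.le _ V) (norm_nonneg q)).trans_lt hV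
  rw [quantumPsiB_mul_eq_mul_quantumPsiB_inv_smul hq hq1 (inv_ne_zero (pow_ne_zero _ hq)) hUV hV
      hdV, inv_inv, quantumPsiB_pow_smul hq hq1 hV, mul_assoc,
    Ring.mul_inverse_cancel_right _ _ (isUnit_quantumPsiB hq hq1 hV)]

lemma quantumPsiB_eq_prod_mul_quantumPsiB_inv_pow_smul (hq : q ≠ 0) (hq1 : ‖q‖ < 1) {V : A}
    {N : ℕ} (hW : ‖q‖ * ‖(q ^ (2 * N))⁻¹ • V‖ < 1) :
    quantumPsiB q V =
      ((List.range N).map fun m : ℕ => 1 + q ^ (-(2 * (m : ℤ) + 1)) • V).reverse.prod *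
        quantumPsiB q ((q ^ (2 * N))⁻¹ • V) := by
  have hfactors : (List.range N).map (fun m => 1 + q ^ (2 * m + 1) • (q ^ (2 * N))⁻¹ • V) =
      ((List.range N).map fun m : ℕ => 1 + q ^ (-(2 * (m : ℤ) + 1)) • V).reverse := by
    rw [← List.map_reverse]
    conv_rhs => rw [List.range_eq_range', List.reverse_range', List.map_map]
    refine List.map_congr_left fun m hm => ?_
    rw [List.mem_range] at hm
    rw [Function.comp_apply, smul_smul, ← zpow_natCast, ← zpow_natCast, ← zpow_neg,
      ← zpow_add₀ hq]
    congr 3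
    push_cast
    omega
  have h := quantumPsiB_pow_smul hq hq1 hW N
  rwa [smul_smul, mul_inv_cancel₀ (pow_ne_zero _ hq), one_smul, hfactors] at h

lemma quantumPsiB_conj_of_mul_eq_pow_smul (hq : q ≠ 0) (hq1 : ‖q‖ < 1) {U V : A} {N : ℕ}
    (hUV : U * V = q ^ (2 * N) • (V * U)) (hV : ‖V‖ < ‖q‖ ^ (2 * N)) :
    quantumPsiB q V * U * Ring.inverse (quantumPsiB q V) =
      U * ((List.range N).map fun m : ℕ =>
        Ring.inverse (1 + q ^ (-(2 * (m : ℤ) + 1)) • V)).prod := by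
  have hq0 : 0 < ‖q‖ := norm_pos_iff.2 hq
  have hV1 : ‖q‖ * ‖V‖ < 1 := (mul_le_of_le_one_left (norm_nonneg _) hq1.le).trans_lt
    (hV.trans_le (pow_le_one₀ hq0.le hq1.le))
  have hW : ‖q‖ * ‖(q ^ (2 * N))⁻¹ • V‖ < 1 := by
    rw [norm_smul, norm_inv, norm_pow, ← div_eq_inv_mul]
    exact (mul_le_of_le_one_left (by positivity) hq1.le).trans_lt
      ((div_lt_one (by positivity)).2 hV)
  have hΨW := isUnit_quantumPsiB hq hq1 hW
  have hfactors : ∀ x ∈ ((List.range N).map fun m : ℕ =>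
      1 + q ^ (-(2 * (m : ℤ) + 1)) • V).reverse, IsUnit x := by
    intro x hx
    obtain ⟨m, hm, rfl⟩ := List.mem_map.1 (List.mem_reverse.1 hx)
    rw [List.mem_range] at hm
    exact isUnit_one_add_of_norm_lt_one (norm_zpow_smul_lt_one hq hq1.le hV (by push_cast; omega))
  rw [quantumPsiB_mul_eq_mul_quantumPsiB_inv_smul hq hq1 (pow_ne_zero _ hq) hUV hV1 hW,
    quantumPsiB_eq_prod_mul_quantumPsiB_inv_pow_smul hq hq1 hW, Ring.inverse_mul (Or.inr hΨW),
    mul_assoc, Ring.mul_inverse_cancel_left _ _ hΨW, Ring.inverse_list_prod hfactors,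
    List.map_reverse, List.reverse_reverse, List.map_map]
  rfl

end BanachAlgebra

/-- Adjoint action of the quantum dilogarithm: if `UV = q^{2b} VU` with `b ≠ 0`,
`s = sgn b`, and `‖V‖ < |q|^{2|b|}`, then `Ψ_q(V)` is invertible, each factor
`1 + q^{-s(2m-1)} V` is invertible, and
`Ψ_q(V) U Ψ_q(V)⁻¹ = U ∏_{m=1}^{|b|} (1 + q^{-s(2m-1)} V)^{-s}`.
(The factors of the product pairwise commute, so it is written as an ordered
product over `m = 1, …, |b|`.) -/
theorem quantumPsiB_adjoint_action {A : Type*} [NormedRing A] [NormedAlgebra ℂ A]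
    [CompleteSpace A] (q : ℂ) (hq0 : 0 < ‖q‖) (hq1 : ‖q‖ < 1) (b : ℤ) (hb : b ≠ 0)
    (U V : A) (hUV : U * V = (q ^ (2 * b)) • (V * U))
    (hV : ‖V‖ < ‖q‖ ^ (2 * b.natAbs)) :
    IsUnit (quantumPsiB q V) ∧
    (∀ m : ℕ, 1 ≤ m → m ≤ b.natAbs →
      IsUnit (1 + (q ^ (-b.sign * (2 * (m : ℤ) - 1))) • V)) ∧
    quantumPsiB q V * U * Ring.inverse (quantumPsiB q V) =
      U * ((List.range b.natAbs).map (fun m =>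
        if 0 < b then Ring.inverse (1 + (q ^ (-b.sign * (2 * ((m : ℤ) + 1) - 1))) • V)
        else 1 + (q ^ (-b.sign * (2 * ((m : ℤ) + 1) - 1))) • V)).prod := by
  have hq : q ≠ 0 := norm_pos_iff.1 hq0
  have hV1 : ‖q‖ * ‖V‖ < 1 := (mul_le_of_le_one_left (norm_nonneg _) hq1.le).trans_lt
    (hV.trans_le (pow_le_one₀ hq0.le hq1.le))
  refine ⟨isUnit_quantumPsiB hq hq1 hV1, fun m hm hmb => isUnit_one_add_of_norm_lt_one
    (norm_zpow_smul_lt_one hq hq1.le hV ?_), ?_⟩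
  · rcases hb.lt_or_gt with hneg | hpos
    · rw [Int.sign_eq_neg_one_of_neg hneg]; omega
    · rw [Int.sign_eq_one_of_pos hpos]; omega
  -- The cast `(m : ℤ)` in the statement makes Lean coerce `List.range b.natAbs` to a `List ℤ`.
  have hcast (N : ℕ) : (do let a ← List.range N; pure (a : ℤ) : List ℤ) =
      (List.range N).map Nat.cast := by
    simp [List.map_eq_flatMap]
  rw [hcast, List.map_map]
  rcases hb.lt_or_gt with hneg | hpos
  · obtain ⟨N, rfl⟩ := Int.exists_eq_neg_ofNat hneg.le
    have hN : N ≠ 0 := by omega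
    rw [mul_neg, zpow_neg, ← Nat.cast_ofNat, ← Nat.cast_mul, zpow_natCast] at hUV
    rw [quantumPsiB_conj_of_mul_eq_inv_pow_smul hq hq1 hUV hV1, Int.natAbs_neg,
      Int.natAbs_natCast]
    refine congrArg (U * ·) (congrArg List.prod (List.map_congr_left fun m _ => ?_))
    rw [Function.comp_apply, if_neg (not_lt.2 hneg.le), Int.sign_neg,
      Int.sign_natCast_of_ne_zero hN, neg_neg, one_mul, ← zpow_natCast]
    push_cast
    ring_nf
  · obtain ⟨N, rfl⟩ := Int.eq_ofNat_of_zero_le hpos.le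
    have hN : N ≠ 0 := by omega
    rw [← Nat.cast_ofNat, ← Nat.cast_mul, zpow_natCast] at hUV
    rw [Int.natAbs_natCast] at hV ⊢
    rw [quantumPsiB_conj_of_mul_eq_pow_smul hq hq1 hUV hV]
    refine congrArg (U * ·) (congrArg List.prod (List.map_congr_left fun m _ => ?_))
    rw [Function.comp_apply, if_pos hpos, Int.sign_natCast_of_ne_zero hN]
    ring_nf
end
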